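/- If φ ∈ Φ_ex and the right derivative φ'_+ exists, then limsup_{x→∞} φ'_+(x)/φ(x) ≤ γ_φ − 1. -/

import Mathlib

open Set Filter

/-- `Φ`: convex, strictly increasing bijections of `[0,∞)` (with `φ 0 = 0`). -/
def Phi (φ : ℝ → ℝ) : Prop :=
  ConvexOn ℝ (Ici 0) φ ∧ StrictMonoOn φ (Ici 0) ∧
    Set.BijOn φ (Ici 0) (Ici 0) ∧ φ 0 = 0

/-- `γ_φ = sup_{x ≥ 0} φ(1+x)/(φ(1)+φ(x))`, valued in `[0,∞]`. -/
noncomputable def gam (φ : ℝ → ℝ) : ENNReal :=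
  ⨆ x : Ici (0:ℝ), ENNReal.ofReal (φ (1 + x) / (φ 1 + φ x))

/-!
Convexity bounds the right derivative by the forward difference, `φ' x ≤ φ (x + 1) - φ x`, and
the definition of `γ_φ` gives `φ (x + 1) ≤ γ (φ 1 + φ x)`. Hence
`φ' x / φ x ≤ γ - 1 + γ φ 1 / φ x`, and the last term vanishes because `φ x → ∞`.
-/

open Topology

lemma HasDerivWithinAt.nonneg_of_monotoneOn_Ici {g : ℝ → ℝ} {g' x : ℝ}
    (hd : HasDerivWithinAt g g' (Ici x) x) (hg : MonotoneOn g (Ici x)) : 0 ≤ g' :=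
  hd.Ioi_of_Ici.nonneg_of_monotoneOn
    (accPt_principal_iff_nhdsWithin.mpr (by simpa using nhdsGT_neBot x))
    (hg.mono Ioi_subset_Ici_self)

namespace Phi

variable {φ : ℝ → ℝ}

lemma nonneg (hφ : Phi φ) {x : ℝ} (hx : 0 ≤ x) : 0 ≤ φ x :=
  hφ.2.2.2 ▸ hφ.2.1.monotoneOn self_mem_Ici hx hx

lemma pos (hφ : Phi φ) {x : ℝ} (hx : 0 < x) : 0 < φ x :=
  hφ.2.2.2 ▸ hφ.2.1 self_mem_Ici hx.le hx

lemma tendsto_atTop (hφ : Phi φ) : Tendsto φ atTop atTop := by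
  refine tendsto_atTop_atTop.mpr fun b ↦ ?_
  obtain ⟨x, hx, hφx⟩ := hφ.2.2.1.surjOn (le_max_right b 0 : max b 0 ∈ Ici 0)
  refine ⟨x, fun y hxy ↦ ?_⟩
  calc b ≤ φ x := hφx ▸ le_max_left b 0
    _ ≤ φ y := hφ.2.1.monotoneOn hx (mem_Ici.mpr (hx.trans hxy)) hxy

lemma apply_one_add_le (hφ : Phi φ) {γ : ℝ} (hγ : gam φ ≤ ENNReal.ofReal γ) {x : ℝ}
    (hx : 0 ≤ x) : φ (1 + x) ≤ γ * (φ 1 + φ x) := by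
  have hden : 0 < φ 1 + φ x := add_pos_of_pos_of_nonneg (hφ.pos one_pos) (hφ.nonneg hx)
  have hratio : 0 < φ (1 + x) / (φ 1 + φ x) := div_pos (hφ.pos (by linarith)) hden
  have hle := (le_iSup (fun y : Ici (0:ℝ) ↦ ENNReal.ofReal (φ (1 + y) / (φ 1 + φ y)))
    ⟨x, hx⟩).trans hγ
  rcases ENNReal.ofReal_le_ofReal_iff'.mp hle with h | h
  · exact (div_le_iff₀ hden).mp h
  · exact absurd h hratio.not_ge

lemma rightDeriv_le_apply_add_one_sub (hφ : Phi φ) {φ'x x : ℝ} (hx : 0 ≤ x)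
    (hd : HasDerivWithinAt φ φ'x (Ici x) x) : φ'x ≤ φ (x + 1) - φ x := by
  have := hφ.1.le_slope_of_hasDerivWithinAt_Ioi hx (mem_Ici.mpr (by linarith)) (lt_add_one x)
    hd.Ioi_of_Ici
  simpa [slope_def_field] using this

lemma rightDeriv_div_le (hφ : Phi φ) {γ : ℝ} (hγ : gam φ ≤ ENNReal.ofReal γ) {φ'x x : ℝ}
    (hx : 0 < x) (hd : HasDerivWithinAt φ φ'x (Ici x) x) :
    φ'x / φ x ≤ γ - 1 + γ * φ 1 / φ x := by
  have hφx := hφ.pos hx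
  have hslope := hφ.rightDeriv_le_apply_add_one_sub hx.le hd
  have hgrowth := hφ.apply_one_add_le hγ hx.le
  rw [add_comm 1 x] at hgrowth
  rw [div_le_iff₀ hφx, add_mul, div_mul_cancel₀ _ hφx.ne']
  linarith

end Phi

theorem stmt_14_general (φ φ' : ℝ → ℝ) (hφ : Phi φ) (γ : ℝ)
    (hγ : gam φ = ENNReal.ofReal γ)
    (hderiv : ∀ x : ℝ, 0 ≤ x → HasDerivWithinAt φ (φ' x) (Ici x) x) :
    Filter.limsup (fun x : ℝ => φ' x / φ x) Filter.atTop ≤ γ - 1 := by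
  set bound : ℝ → ℝ := fun x ↦ γ - 1 + γ * φ 1 / φ x
  have hbound : Tendsto bound atTop (𝓝 (γ - 1)) := by
    simpa using tendsto_const_nhds.add (tendsto_const_nhds.div_atTop hφ.tendsto_atTop)
  have hle : ∀ᶠ x in atTop, φ' x / φ x ≤ bound x := by
    filter_upwards [eventually_gt_atTop 0] with x hx
    exact hφ.rightDeriv_div_le hγ.le hx (hderiv x hx.le)
  -- without an eventual lower bound the `limsup` in `ℝ` would be a junk value
  have hnonneg : ∀ᶠ x in atTop, 0 ≤ φ' x / φ x := by
    filter_upwards [eventually_gt_atTop 0] with x hx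
    exact div_nonneg ((hderiv x hx.le).nonneg_of_monotoneOn_Ici
      (hφ.2.1.monotoneOn.mono (Ici_subset_Ici.mpr hx.le))) (hφ.pos hx).le
  calc limsup (fun x ↦ φ' x / φ x) atTop
      ≤ limsup bound atTop := limsup_le_limsup hle
        (isCoboundedUnder_le_of_eventually_le atTop hnonneg) hbound.isBoundedUnder_le
    _ = γ - 1 := hbound.limsup_eq

/-- If `φ ∈ Φ_ex` with `γ_φ = γ` and `φ'` is the right derivative of `φ`,
then `limsup_{x→∞} φ'(x)/φ(x) ≤ γ − 1`. -/
theorem stmt_14 (φ φ' : ℝ → ℝ) (hφ : Phi φ) (γ : ℝ)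
    (hγ : gam φ = ENNReal.ofReal γ) (hγ1 : 1 ≤ γ)
    (hderiv : ∀ x : ℝ, 0 ≤ x → HasDerivWithinAt φ (φ' x) (Ici x) x) :
    Filter.limsup (fun x : ℝ => φ' x / φ x) Filter.atTop ≤ γ - 1 :=
  stmt_14_general φ φ' hφ γ hγ hderiv
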